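/- Let A be an n×n real matrix whose characteristic polynomial is λⁿ + a₁λ^{n−1} + ⋯ + aₙ, let Ψ, Φ be as defined, and let b ∈ ℝⁿ. Then eₙᵀ ΨΦ b = (−1)^{n+1} e₁ᵀ adj(A) b; that is, the quantity s = eₙᵀ Q b (with Q = ΨΦ) satisfies s = (−1)^{n+1} ρᵀ b where ρᵀ = e₁ᵀ adj(A). -/

import Mathlib

open Matrix Polynomial

/-- The `n×n` companion matrix with first column `(−a₁,…,−aₙ)ᵀ` and
superdiagonal ones (`a i` encodes `a_{i+1}`). -/
def compC {n : ℕ} (a : Fin (n + 1) → ℝ) : Matrix (Fin (n + 1)) (Fin (n + 1)) ℝ :=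
  Matrix.of fun i j =>
    if (j : ℕ) = 0 then -a i else if (j : ℕ) = (i : ℕ) + 1 then 1 else 0

/-- The lower-triangular matrix `Ψ` with unit diagonal and `Ψ_{ij} = a_{i−j}`
for `i > j`. -/
def psiM {n : ℕ} (a : Fin (n + 1) → ℝ) : Matrix (Fin (n + 1)) (Fin (n + 1)) ℝ :=
  Matrix.of fun i j =>
    if (i : ℕ) = (j : ℕ) then 1
    else if (j : ℕ) < (i : ℕ) then
      a ⟨(i : ℕ) - (j : ℕ) - 1,
        lt_of_le_of_lt (le_trans (Nat.sub_le _ _) (Nat.sub_le _ _)) i.isLt⟩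
    else 0

/-- The observability matrix `Φ` whose `i`-th row is `e₁ᵀ A^{i−1}`. -/
noncomputable def phiM {n : ℕ} (A : Matrix (Fin (n + 1)) (Fin (n + 1)) ℝ) :
    Matrix (Fin (n + 1)) (Fin (n + 1)) ℝ :=
  Matrix.of fun i j => (A ^ (i : ℕ)) 0 j

/-- The nilpotent shift matrix `J` with superdiagonal ones. -/
def shiftJ (n : ℕ) : Matrix (Fin (n + 1)) (Fin (n + 1)) ℝ :=
  Matrix.of fun i j => if (j : ℕ) = (i : ℕ) + 1 then 1 else 0

/-! Write `χ = X · q + χ(0)` for the characteristic polynomial, so `q = χ.divX`. Cayley–Hamilton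
gives `q(A) · A = -χ(0) = (-1)^(N+1) det A` (size `N`), the relation `adj A · A = det A` up to the
sign; hence `q(A) = (-1)^(N+1) adj A` whenever `det A` is cancellable, and the general case follows
by specialising the generic matrix `X · 1 + A` over `R[X]` at `X = 0`. The last row of `Ψ` lists
the coefficients of `q`, so the last row of `ΨΦ` is the first row of `q(A)`. -/

theorem Polynomial.map_divX {R S : Type*} [Semiring R] [Semiring S] (f : R →+* S) (p : R[X]) :
    p.divX.map f = (p.map f).divX := by
  ext k; simp [coeff_divX]

namespace Matrix

variable {n R : Type*} [Fintype n] [DecidableEq n] [CommRing R]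

theorem aeval_divX_charpoly_mul (M : Matrix n n R) :
    aeval M M.charpoly.divX * M = ((-1) ^ (Fintype.card n + 1) * M.det) • (1 : Matrix n n R) := by
  have h := congrArg (aeval M) M.charpoly.divX_mul_X_add
  rw [aeval_add, aeval_mul, aeval_X, aeval_C, aeval_self_charpoly, add_eq_zero_iff_eq_neg] at h
  have hsign : ((-1 : R) ^ Fintype.card n) * (-1) ^ Fintype.card n = 1 := by
    rw [← mul_pow]; simp
  rw [h, det_eq_sign_charpoly_coeff, Algebra.algebraMap_eq_smul_one, ← neg_smul]
  congr 1
  linear_combination M.charpoly.coeff 0 * hsign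

theorem aeval_divX_charpoly_of_isLeftRegular_det {M : Matrix n n R} (h : IsLeftRegular M.det) :
    aeval M M.charpoly.divX = (-1 : R) ^ (Fintype.card n + 1) • M.adjugate := by
  refine (isRegular_of_isLeftRegular_det h).right ?_
  simp only
  rw [aeval_divX_charpoly_mul, smul_mul, adjugate_mul, smul_smul]

theorem aeval_divX_charpoly (M : Matrix n n R) :
    aeval M M.charpoly.divX = (-1 : R) ^ (Fintype.card n + 1) • M.adjugate := by
  set N : Matrix n n R[X] := (X : R[X]) • (1 : Matrix n n R[X]) + M.map C
  let φ : Matrix n n R[X] →+* Matrix n n R := (evalRingHom 0).mapMatrix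
  have hφN : φ N = M := by ext; simp [φ, N]
  have hN : IsLeftRegular N.det := (Monic.isRegular (leadingCoeff_det_X_one_add_C M)).left
  have hcharpoly : N.charpoly.map (evalRingHom 0) = M.charpoly := by
    rw [← charpoly_map, ← hφN]; rfl
  have hφ : (algebraMap R (Matrix n n R)).comp (evalRingHom 0) = φ.comp (algebraMap R[X] _) := by
    ext r i j <;> simp [φ, algebraMap_eq_diagonal, diagonal_apply] <;> split_ifs <;> simp
  have hφsmul : ∀ (k : ℕ) (B : Matrix n n R[X]), φ ((-1 : R[X]) ^ k • B) = (-1 : R) ^ k • φ B := by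
    intro k B; ext; simp [φ]
  have := congrArg φ (aeval_divX_charpoly_of_isLeftRegular_det hN)
  rwa [map_aeval_eq_aeval_map hφ, Polynomial.map_divX, hcharpoly, hφN, hφsmul, RingHom.map_adjugate, hφN] at this

end Matrix

theorem psiM_last_apply {n : ℕ} (a : Fin (n + 1) → ℝ) (k : Fin (n + 1)) :
    psiM a (Fin.last n) k
      = (X ^ (n + 1) + ∑ i : Fin (n + 1), C (a i) * X ^ (n - (i : ℕ))).divX.coeff k := by
  simp only [coeff_divX, coeff_add, coeff_X_pow, finsetSum_coeff, coeff_C_mul_X_pow, psiM, of_apply,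
    Fin.val_last]
  by_cases hk : (k : ℕ) = n
  · have hnone : ∀ i : Fin (n + 1), n + 1 ≠ n - i := fun i => by omega
    simp [hk, hnone]
  · have hk' : (k : ℕ) < n := by omega
    have hone : ∀ i : Fin (n + 1), (k : ℕ) + 1 = n - i ↔ i = ⟨n - k - 1, by omega⟩ := fun i => by
      simp only [Fin.ext_iff]; omega
    simp [hk, hk', Ne.symm hk, hone]

theorem sum_coeff_mul_phiM_apply {n : ℕ} {q : ℝ[X]} (hq : q.natDegree < n + 1)
    (A : Matrix (Fin (n + 1)) (Fin (n + 1)) ℝ) (j : Fin (n + 1)) :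
    ∑ k : Fin (n + 1), q.coeff k * phiM A k j = aeval A q 0 j := by
  rw [aeval_eq_sum_range' hq, Matrix.sum_apply,
    ← Fin.sum_univ_eq_sum_range (fun k => (q.coeff k • A ^ k) 0 j)]
  simp [phiM]

/-- `s = eₙᵀ ΨΦ b = (−1)^{n+1} ρᵀ b`, where `ρᵀ = e₁ᵀ adj(A)`
(here the matrices have size `n + 1`, so the exponent is `(n + 1) + 1`). -/
theorem s_eq_sign_rho_b (n : ℕ) (a : Fin (n + 1) → ℝ)
    (A : Matrix (Fin (n + 1)) (Fin (n + 1)) ℝ) (b : Fin (n + 1) → ℝ)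
    (hchar : A.charpoly
      = X ^ (n + 1) + ∑ i : Fin (n + 1), C (a i) * X ^ (n - (i : ℕ))) :
    ((psiM a * phiM A).mulVec b) (Fin.last n)
      = (-1 : ℝ) ^ (n + 1 + 1) * (A.adjugate.mulVec b) 0 := by
  have hdeg : A.charpoly.divX.natDegree < n + 1 := by
    rw [natDegree_divX_eq_natDegree_tsub_one, charpoly_natDegree_eq_dim, Fintype.card_fin]
    omega
  have hrow : (psiM a * phiM A) (Fin.last n) = aeval A A.charpoly.divX 0 := by
    funext j
    simp only [mul_apply, psiM_last_apply, ← hchar]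
    exact sum_coeff_mul_phiM_apply hdeg A j
  calc ((psiM a * phiM A) *ᵥ b) (Fin.last n) = (aeval A A.charpoly.divX *ᵥ b) 0 := by
        simp only [mulVec, hrow]
    _ = (-1 : ℝ) ^ (n + 1 + 1) * (A.adjugate *ᵥ b) 0 := by
        rw [aeval_divX_charpoly, smul_mulVec, Pi.smul_apply, smul_eq_mul, Fintype.card_fin]
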